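/- Neighbouring-plaquette orbit relation: let α and β be interior plaquettes of the n×n FPL domain sharing a common edge, with α a cell of the H_+ round (hence β a cell of the H_− round). Then for every φ ∈ Fpl(n,+): Σ_{φ′ ∈ O_G(φ)} N_α(φ′) = Σ_{φ′ ∈ O_G(H̃_+(φ))} N_β(φ′), where O_G denotes the orbit under G inside Fpl(n,+). -/

import Mathlib

open scoped Classical

/-! ### Link patterns

A link pattern on `2n` cyclically ordered points is a fixed-point-free noncrossing
involution.  The point `i : ZMod (2*n)` represents the label `lbl (2*n) i ∈ {1,…,2n}`
(so label arithmetic is arithmetic in `ZMod (2*n)`). -/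

instance instNeZeroTwoMul (n : ℕ) [NeZero n] : NeZero (2 * n) :=
  ⟨by have := NeZero.ne n; omega⟩

/-- The label in `{1,…,M}` represented by a point of `ZMod M`. -/
def lbl (M : ℕ) (i : ZMod M) : ℕ := if i.val = 0 then M else i.val

/-- A fixed-point-free involution of the `2n` points on a circle which is noncrossing. -/
def IsLinkPattern (n : ℕ) (f : ZMod (2 * n) → ZMod (2 * n)) : Prop :=
  Function.Involutive f ∧ (∀ i, f i ≠ i) ∧
    ∀ i j : ZMod (2 * n), ¬ (i.val < j.val ∧ j.val < (f i).val ∧ (f i).val < (f j).val)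

/-- The set `LP(n)` of link patterns on `2n` points, as a subtype. -/
abbrev LinkPattern (n : ℕ) := {f : ZMod (2 * n) → ZMod (2 * n) // IsLinkPattern n f}

/-- Rotation `R`: `R π` pairs `i-1` with `j-1` whenever `π` pairs `i` with `j`. -/
def rotMap (M : ℕ) (f : ZMod M → ZMod M) : ZMod M → ZMod M := fun i => f (i + 1) - 1

/-- Inverse rotation `R⁻¹`. -/
def rotInvMap (M : ℕ) (f : ZMod M → ZMod M) : ZMod M → ZMod M := fun i => f (i - 1) + 1

/-- The Temperley–Lieb map `e_j` (here `j : ZMod M` represents the label `lbl M j`):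
if `π` pairs `j` with `j+1` it does nothing, otherwise it re-pairs `j` with `j+1`
and `π(j)` with `π(j+1)`. -/
def eMap (M : ℕ) (j : ZMod M) (f : ZMod M → ZMod M) : ZMod M → ZMod M := fun i =>
  if f j = j + 1 then f i
  else if i = j then j + 1
  else if i = j + 1 then j
  else if i = f j then f (j + 1)
  else if i = f (j + 1) then f j
  else f i

/-! ### The `n × n` FPL domain

Vertices are `(x,y)` with `1 ≤ x,y ≤ n`.  `SqEdge.h x y` is the horizontal edge joining
`(x,y)` and `(x+1,y)` (valid for `0 ≤ x ≤ n`, `1 ≤ y ≤ n`; `x = 0` and `x = n` give the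
west/east external edges); `SqEdge.v x y` is the vertical edge joining `(x,y)` and
`(x,y+1)` (valid for `1 ≤ x ≤ n`, `0 ≤ y ≤ n`; `y = 0` and `y = n` give the south/north
external edges).  A configuration is a map `SqEdge → Bool` (`true` = black). -/

inductive SqEdge : Type
  | h : ℕ → ℕ → SqEdge
  | v : ℕ → ℕ → SqEdge
deriving DecidableEq

/-- Validity of an edge for the `n × n` domain. -/
def validB (n : ℕ) : SqEdge → Bool
  | .h x y => decide (x ≤ n) && decide (1 ≤ y) && decide (y ≤ n)
  | .v x y => decide (1 ≤ x) && decide (x ≤ n) && decide (y ≤ n)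

/-- The external edge with counterclockwise label `k ∈ {1,…,4n}`, starting from the
bottom external edge of the corner vertex `(1,1)`. -/
def extEdge (n k : ℕ) : SqEdge :=
  if k ≤ n then .v k 0
  else if k ≤ 2 * n then .h n (k - n)
  else if k ≤ 3 * n then .v (3 * n + 1 - k) n
  else .h 0 (4 * n + 1 - k)

def IsExternal (n : ℕ) (e : SqEdge) : Prop := ∃ k, 1 ≤ k ∧ k ≤ 4 * n ∧ e = extEdge n k

/-- The west, east, south, north edges incident to the vertex `(x,y)`. -/
def wEdge (x y : ℕ) : SqEdge := .h (x - 1) y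
def eEdge (x y : ℕ) : SqEdge := .h x y
def sEdge (x y : ℕ) : SqEdge := .v x (y - 1)
def nEdge (x y : ℕ) : SqEdge := .v x y

def IncidentAt (e : SqEdge) (x y : ℕ) : Prop :=
  e = wEdge x y ∨ e = eEdge x y ∨ e = sEdge x y ∨ e = nEdge x y

def blackDeg (φ : SqEdge → Bool) (x y : ℕ) : ℕ :=
  (if φ (wEdge x y) then 1 else 0) + (if φ (eEdge x y) then 1 else 0) +
    (if φ (sEdge x y) then 1 else 0) + (if φ (nEdge x y) then 1 else 0)

/-- A fully-packed loop configuration on the `n × n` domain: it is supported on the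
valid edges, and every vertex is incident to exactly two black (and two white) edges. -/
def IsFpl (n : ℕ) (φ : SqEdge → Bool) : Prop :=
  (∀ e, φ e = true → validB n e = true) ∧
    ∀ x y, 1 ≤ x → x ≤ n → 1 ≤ y → y ≤ n → blackDeg φ x y = 2

/-- Alternating boundary colouring `τ₊` (external label `1` black). -/
def BPlus (n : ℕ) (φ : SqEdge → Bool) : Prop :=
  ∀ k, 1 ≤ k → k ≤ 4 * n → (φ (extEdge n k) = true ↔ k % 2 = 1)

/-- Complementary alternating boundary colouring `τ₋`. -/
def BMinus (n : ℕ) (φ : SqEdge → Bool) : Prop :=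
  ∀ k, 1 ≤ k → k ≤ 4 * n → (φ (extEdge n k) = true ↔ k % 2 = 0)

/-- Two (valid) edges of colour `b` sharing an internal vertex. -/
def adjC (n : ℕ) (b : Bool) (φ : SqEdge → Bool) (e e' : SqEdge) : Prop :=
  e ≠ e' ∧ validB n e = true ∧ validB n e' = true ∧ φ e = b ∧ φ e' = b ∧
    ∃ x y, 1 ≤ x ∧ x ≤ n ∧ 1 ≤ y ∧ y ≤ n ∧ IncidentAt e x y ∧ IncidentAt e' x y

/-- Connectivity through monochromatic paths of colour `b`. -/
def Conn (n : ℕ) (b : Bool) (φ : SqEdge → Bool) : SqEdge → SqEdge → Prop :=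
  Relation.ReflTransGen (adjC n b φ)

/-- In `Fpl(n,+)` the black external edge with black label `t ∈ {1,…,2n}` has overall
label `2t-1`.  `φ` has link pattern (matching) `g` iff for every point `i` the black
external edges with black labels `lbl i` and `lbl (g i)` are joined by a black path. -/
def RealizesP (n : ℕ) (φ : SqEdge → Bool) (g : ZMod (2 * n) → ZMod (2 * n)) : Prop :=
  ∀ i, Conn n true φ (extEdge n (2 * lbl (2 * n) i - 1)) (extEdge n (2 * lbl (2 * n) (g i) - 1))

/-- In `Fpl(n,-)` the black external edge with black label `t` has overall label `2t`
(black labelling starting from the bottom external edge of the vertex `(2,1)`). -/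
def RealizesM (n : ℕ) (φ : SqEdge → Bool) (g : ZMod (2 * n) → ZMod (2 * n)) : Prop :=
  ∀ i, Conn n true φ (extEdge n (2 * lbl (2 * n) i)) (extEdge n (2 * lbl (2 * n) (g i)))

/-- `Ψ_{n,+}(g)`: the number of FPLs in `Fpl(n,+)` with link pattern `g`. -/
noncomputable def PsiP (n : ℕ) (g : ZMod (2 * n) → ZMod (2 * n)) : ℕ :=
  Set.ncard {φ : SqEdge → Bool | IsFpl n φ ∧ BPlus n φ ∧ RealizesP n φ g}

/-- `Ψ_{n,-}(g)`: the number of FPLs in `Fpl(n,-)` with link pattern `g`. -/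
noncomputable def PsiM (n : ℕ) (g : ZMod (2 * n) → ZMod (2 * n)) : ℕ :=
  Set.ncard {φ : SqEdge → Bool | IsFpl n φ ∧ BMinus n φ ∧ RealizesM n φ g}

/-- The plaquette with lower-left corner `(x,y)` (for `1 ≤ x,y ≤ n-1`) has horizontal
edges `.h x y`, `.h x (y+1)` and vertical edges `.v x y`, `.v (x+1) y`.
`Nplaq φ x y` is `+1` if both horizontal edges are black and both vertical edges white,
`-1` in the complementary case, and `0` otherwise. -/
def Nplaq (φ : SqEdge → Bool) (x y : ℕ) : ℤ :=
  if φ (.h x y) = true ∧ φ (.h x (y + 1)) = true ∧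
      φ (.v x y) = false ∧ φ (.v (x + 1) y) = false then 1
  else if φ (.h x y) = false ∧ φ (.h x (y + 1)) = false ∧
      φ (.v x y) = true ∧ φ (.v (x + 1) y) = true then -1
  else 0

/-! ### Wieland gyration on the `n × n` domain.

For `H₊` the external edges are glued in the pairs `(1,2),(3,4),…`; the cells of the
resulting partition of the edge set are the interior plaquettes `(x,y)` with `x+y` odd,
together with boundary cells (of length 2 or 3) through the glued vertices.  For `H₋`
(pairs `(2,3),(4,5),…,(4n,1)`) the interior cells are the plaquettes with `x+y` even.
`H₊/H₋` complement the colours on every cell except the alternating 4-cells (interior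
plaquettes whose colours alternate), which are kept fixed. -/

/-- The interior cell (plaquette of parity `p`) containing the edge `e`, if any;
edges in no interior plaquette of parity `p` lie in a boundary cell. -/
def plaqOf (n p : ℕ) : SqEdge → Option (ℕ × ℕ)
  | .h x y =>
    if 1 ≤ x ∧ x ≤ n - 1 ∧ 1 ≤ y ∧ y ≤ n - 1 ∧ (x + y) % 2 = p then some (x, y)
    else if 1 ≤ x ∧ x ≤ n - 1 ∧ 2 ≤ y ∧ y ≤ n ∧ (x + y - 1) % 2 = p then some (x, y - 1)
    else none
  | .v x y =>
    if 1 ≤ x ∧ x ≤ n - 1 ∧ 1 ≤ y ∧ y ≤ n - 1 ∧ (x + y) % 2 = p then some (x, y)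
    else if 2 ≤ x ∧ x ≤ n ∧ 1 ≤ y ∧ y ≤ n - 1 ∧ (x + y - 1) % 2 = p then some (x - 1, y)
    else none

/-- Colours alternate around the plaquette `(x,y)`. -/
def altPlaq (φ : SqEdge → Bool) (x y : ℕ) : Bool :=
  (φ (.h x y) == φ (.h x (y + 1))) && (φ (.v x y) == φ (.v (x + 1) y)) &&
    (φ (.h x y) != φ (.v x y))

/-- One gyration round on the cells of parity `p`. -/
def gyrHalf (n p : ℕ) (φ : SqEdge → Bool) : SqEdge → Bool := fun e =>
  if validB n e then
    match plaqOf n p e with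
    | some (x, y) => if altPlaq φ x y then φ e else !(φ e)
    | none => !(φ e)
  else false

/-- The gyration round `H₊` (interior cells: plaquettes with `x+y` odd). -/
def Hplus (n : ℕ) : (SqEdge → Bool) → SqEdge → Bool := gyrHalf n 1

/-- The gyration round `H₋` (interior cells: plaquettes with `x+y` even). -/
def Hminus (n : ℕ) : (SqEdge → Bool) → SqEdge → Bool := gyrHalf n 0

/-- Wieland's gyration `G = H₋ ∘ H₊`. -/
def gyr (n : ℕ) (φ : SqEdge → Bool) : SqEdge → Bool := Hminus n (Hplus n φ)

/-- Complementation of the colours of all (valid) edges. -/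
def complV (n : ℕ) (φ : SqEdge → Bool) : SqEdge → Bool := fun e =>
  if validB n e then !(φ e) else false

/-- `H̃₊`: the round `H₊` followed by complementation (a map `Fpl(n,+) → Fpl(n,+)`). -/
def Htp (n : ℕ) (φ : SqEdge → Bool) : SqEdge → Bool := complV n (Hplus n φ)

/-- The orbit `{G^k φ : k ≥ 0}` of `φ` under gyration. -/
def orbitG (n : ℕ) (φ : SqEdge → Bool) : Set (SqEdge → Bool) :=
  Set.range fun k => (gyr n)^[k] φ

/-!
Write `H̃_p` for a gyration round on the cells of parity `p` followed by complementation, so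
that `H̃₊ = H̃₁` and `G = H̃₀ ∘ H̃₁`. The cells of length 4 whose colours alternate are exactly
the plaquettes with `N ≠ 0`, so `H̃_p` changes the colour of a horizontal edge by `-N` of its
parity-`p` cell (and not at all if that cell is a boundary cell). On a finite set `S` of
configurations permuted by `H̃_q ∘ H̃_p` these colour changes telescope: for the horizontal edge
between the plaquettes `(x, y)` and `(x, y + 1)`, the sums over `S` of `N` at these two
plaquettes, each evaluated on `S` or on `H̃_p(S)` according to its parity, add up to `0`. The
bottom edge of the first row lies in a single plaquette, so going up each column all these sums
vanish. With `S` the `G`-orbit of `φ` (`p = 1`) and the `G`-orbit of `H̃₊ φ` (`p = 0`, using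
`G⁻¹ = H̃₁ ∘ H̃₀`), both sides of the relation are `0`.
-/

def IsSupported (n : ℕ) (ψ : SqEdge → Bool) : Prop := ∀ e, validB n e = false → ψ e = false

/-- The interior plaquette `(a, b)` is a cell of the gyration round of parity `p`. -/
def IsCell (n p a b : ℕ) : Prop := (1 ≤ a ∧ a ≤ n - 1 ∧ 1 ≤ b ∧ b ≤ n - 1) ∧ (a + b) % 2 = p

/-- `H̃_p`; in particular `Htp n = gyrHalfCompl n 1`. -/
def gyrHalfCompl (n p : ℕ) (ψ : SqEdge → Bool) : SqEdge → Bool := complV n (gyrHalf n p ψ)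

def plaqEdges (a b : ℕ) : List SqEdge := [.h a b, .h a (b + 1), .v a b, .v (a + 1) b]

section Gyration

variable {n p : ℕ}

theorem IsFpl.isSupported {φ : SqEdge → Bool} (h : IsFpl n φ) : IsSupported n φ := by
  intro e he
  by_contra hφe
  simpa [he] using h.1 e (by simpa using hφe)

theorem isSupported_gyrHalf (ψ : SqEdge → Bool) : IsSupported n (gyrHalf n p ψ) := by
  intro e he
  simp [gyrHalf, he]

theorem isSupported_complV (ψ : SqEdge → Bool) : IsSupported n (complV n ψ) := by
  intro e he
  simp [complV, he]

theorem isSupported_gyrHalfCompl (ψ : SqEdge → Bool) : IsSupported n (gyrHalfCompl n p ψ) :=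
  isSupported_complV _

theorem setOf_validB_finite (n : ℕ) : {e | validB n e = true}.Finite := by
  refine (Set.finite_range fun q : Fin (n + 1) × Fin (n + 1) × Bool =>
    if q.2.2 then SqEdge.h q.1 q.2.1 else SqEdge.v q.1 q.2.1).subset ?_
  rintro (⟨u, v⟩ | ⟨u, v⟩) he <;> simp only [Set.mem_ofPred_eq, validB, Bool.and_eq_true,
    decide_eq_true_eq] at he
  · exact ⟨(⟨u, by omega⟩, ⟨v, by omega⟩, true), rfl⟩
  · exact ⟨(⟨u, by omega⟩, ⟨v, by omega⟩, false), rfl⟩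

theorem setOf_isSupported_finite (n : ℕ) : {ψ | IsSupported n ψ}.Finite := by
  refine Set.Finite.of_finite_image (f := fun ψ : SqEdge → Bool => {e | ψ e = true})
    ((setOf_validB_finite n).finite_subsets.subset ?_) ?_
  · rintro _ ⟨ψ, hψ, rfl⟩ e he
    by_contra hv
    simp_all [hψ e (by simpa using hv)]
  · intro ψ _ χ _ h
    funext e
    simpa using congrArg (e ∈ ·) h

theorem validB_and_plaqOf_of_mem_plaqEdges {a b : ℕ} (hab : IsCell n p a b) {e : SqEdge}
    (he : e ∈ plaqEdges a b) : validB n e = true ∧ plaqOf n p e = some (a, b) := by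
  obtain ⟨⟨h1, h2, h3, h4⟩, h5⟩ := hab
  simp only [plaqEdges, List.mem_cons, List.not_mem_nil, or_false] at he
  rcases he with rfl | rfl | rfl | rfl <;>
    refine ⟨by simp only [validB, Bool.and_eq_true, decide_eq_true_eq]; omega, ?_⟩ <;>
    simp only [plaqOf] <;> split_ifs <;> simp_all <;> omega

theorem isCell_of_plaqOf_eq_some {e : SqEdge} {a b : ℕ} (h : plaqOf n p e = some (a, b)) :
    IsCell n p a b := by
  unfold IsCell
  cases e <;> simp only [plaqOf] at h <;> split_ifs at h <;>
    simp only [Option.some.injEq, Prod.mk.injEq] at h <;> omega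

theorem gyrHalfCompl_of_validB_eq_false (ψ : SqEdge → Bool) {e : SqEdge}
    (hv : validB n e = false) : gyrHalfCompl n p ψ e = false := by
  simp [gyrHalfCompl, complV, hv]

theorem gyrHalfCompl_of_plaqOf_eq_none (ψ : SqEdge → Bool) {e : SqEdge}
    (hv : validB n e = true) (hp : plaqOf n p e = none) : gyrHalfCompl n p ψ e = ψ e := by
  simp [gyrHalfCompl, complV, gyrHalf, hv, hp]

theorem gyrHalfCompl_of_plaqOf_eq_some (ψ : SqEdge → Bool) {e : SqEdge} {a b : ℕ}
    (hv : validB n e = true) (hp : plaqOf n p e = some (a, b)) :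
    gyrHalfCompl n p ψ e = xor (ψ e) (altPlaq ψ a b) := by
  cases h : altPlaq ψ a b <;> simp [gyrHalfCompl, complV, gyrHalf, hv, hp, h]

theorem altPlaq_eq_of_xor {ψ ψ' : SqEdge → Bool} {a b : ℕ} (c : Bool)
    (h : ∀ e ∈ plaqEdges a b, ψ' e = xor (ψ e) c) : altPlaq ψ' a b = altPlaq ψ a b := by
  simp only [plaqEdges, List.mem_cons, List.not_mem_nil, or_false, forall_eq_or_imp,
    forall_eq] at h
  rw [altPlaq, h.1, h.2.1, h.2.2.1, h.2.2.2]
  unfold altPlaq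
  cases c <;> cases ψ (.h a b) <;> cases ψ (.h a (b + 1)) <;> cases ψ (.v a b) <;>
    cases ψ (.v (a + 1) b) <;> rfl

theorem altPlaq_gyrHalfCompl (ψ : SqEdge → Bool) {a b : ℕ} (hab : IsCell n p a b) :
    altPlaq (gyrHalfCompl n p ψ) a b = altPlaq ψ a b :=
  altPlaq_eq_of_xor _ fun _ he =>
    have hcell := validB_and_plaqOf_of_mem_plaqEdges hab he
    gyrHalfCompl_of_plaqOf_eq_some ψ hcell.1 hcell.2

theorem gyrHalfCompl_gyrHalfCompl {ψ : SqEdge → Bool} (hψ : IsSupported n ψ) :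
    gyrHalfCompl n p (gyrHalfCompl n p ψ) = ψ := by
  funext e
  cases hv : validB n e
  · rw [gyrHalfCompl_of_validB_eq_false _ hv, hψ e hv]
  cases hp : plaqOf n p e with
  | none => rw [gyrHalfCompl_of_plaqOf_eq_none _ hv hp, gyrHalfCompl_of_plaqOf_eq_none _ hv hp]
  | some ab =>
    rw [gyrHalfCompl_of_plaqOf_eq_some _ hv hp, gyrHalfCompl_of_plaqOf_eq_some _ hv hp,
      altPlaq_gyrHalfCompl _ (isCell_of_plaqOf_eq_some hp), Bool.xor_assoc, Bool.xor_self,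
      Bool.xor_false]

theorem complV_complV {ψ : SqEdge → Bool} (hψ : IsSupported n ψ) : complV n (complV n ψ) = ψ := by
  funext e
  cases hv : validB n e <;> simp [complV, hv, hψ e]

theorem altPlaq_complV (ψ : SqEdge → Bool) {a b : ℕ} (hab : IsCell n p a b) :
    altPlaq (complV n ψ) a b = altPlaq ψ a b :=
  altPlaq_eq_of_xor true fun _ he => by
    simp [complV, (validB_and_plaqOf_of_mem_plaqEdges hab he).1]

theorem complV_gyrHalf (ψ : SqEdge → Bool) :
    complV n (gyrHalf n p ψ) = gyrHalf n p (complV n ψ) := by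
  funext e
  cases hv : validB n e
  · simp [complV, gyrHalf, hv]
  cases hp : plaqOf n p e with
  | none => simp [complV, gyrHalf, hv, hp]
  | some ab =>
    have halt := altPlaq_complV ψ (isCell_of_plaqOf_eq_some hp)
    cases h : altPlaq ψ ab.1 ab.2 <;> simp [complV, gyrHalf, hv, hp, h, halt]

theorem gyr_eq_comp (n : ℕ) : gyr n = gyrHalfCompl n 0 ∘ gyrHalfCompl n 1 := by
  funext ψ
  simp only [Function.comp_apply, gyrHalfCompl, gyr, Hminus, Hplus, ← complV_gyrHalf]
  rw [complV_complV (isSupported_gyrHalf _)]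

theorem gyrHalfCompl_gyr {ψ : SqEdge → Bool} (hψ : IsSupported n ψ) :
    gyrHalfCompl n 1 (gyrHalfCompl n 0 (gyr n ψ)) = ψ := by
  rw [gyr_eq_comp, Function.comp_apply, gyrHalfCompl_gyrHalfCompl (isSupported_gyrHalfCompl _),
    gyrHalfCompl_gyrHalfCompl hψ]

theorem gyr_gyrHalfCompl {ψ : SqEdge → Bool} (hψ : IsSupported n ψ) :
    gyr n (gyrHalfCompl n 1 (gyrHalfCompl n 0 ψ)) = ψ := by
  rw [gyr_eq_comp, Function.comp_apply, gyrHalfCompl_gyrHalfCompl (isSupported_gyrHalfCompl _),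
    gyrHalfCompl_gyrHalfCompl hψ]

theorem orbitG_subset_setOf_isSupported {φ : SqEdge → Bool} (hφ : IsSupported n φ) :
    orbitG n φ ⊆ {ψ | IsSupported n ψ} := by
  rintro _ ⟨_ | k, rfl⟩
  · exact hφ
  · show IsSupported n ((gyr n)^[k + 1] φ)
    rw [Function.iterate_succ_apply']
    exact isSupported_gyrHalf _

theorem orbitG_finite {φ : SqEdge → Bool} (hφ : IsSupported n φ) : (orbitG n φ).Finite :=
  (setOf_isSupported_finite n).subset (orbitG_subset_setOf_isSupported hφ)

theorem mapsTo_gyr_orbitG (φ : SqEdge → Bool) : Set.MapsTo (gyr n) (orbitG n φ) (orbitG n φ) := by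
  rintro _ ⟨k, rfl⟩
  exact ⟨k + 1, Function.iterate_succ_apply' _ _ _⟩

theorem bijOn_gyr_orbitG {φ : SqEdge → Bool} (hφ : IsSupported n φ) :
    Set.BijOn (gyr n) (orbitG n φ) (orbitG n φ) :=
  ((orbitG_finite hφ).injOn_iff_bijOn_of_mapsTo (mapsTo_gyr_orbitG φ)).mp <|
    Set.LeftInvOn.injOn (f₁' := gyrHalfCompl n 1 ∘ gyrHalfCompl n 0) fun _ hψ =>
      gyrHalfCompl_gyr (orbitG_subset_setOf_isSupported hφ hψ)

theorem bijOn_gyrHalfCompl_comp_orbitG {φ : SqEdge → Bool} (hφ : IsSupported n φ) :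
    Set.BijOn (gyrHalfCompl n 1 ∘ gyrHalfCompl n 0) (orbitG n φ) (orbitG n φ) :=
  (bijOn_gyr_orbitG hφ).symm
    ⟨fun _ hψ => gyr_gyrHalfCompl (orbitG_subset_setOf_isSupported hφ hψ),
      fun _ hψ => gyrHalfCompl_gyr (orbitG_subset_setOf_isSupported hφ hψ)⟩

end Gyration

theorem finsum_mem_sub_comp_eq_zero {α G : Type*} [AddCommGroup G] {S : Set α} (hS : S.Finite)
    {T : α → α} (hT : Set.BijOn T S S) (f : α → G) : ∑ᶠ a ∈ S, (f (T a) - f a) = 0 := by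
  rw [finsum_mem_sub_distrib (fun a => f (T a)) f hS, sub_eq_zero]
  exact finsum_mem_eq_of_bijOn (g := f) T hT fun _ _ => rfl

/-- Row `0` lies outside the domain, so `Ncell p ψ x 0 = 0`. -/
def Ncell (p : ℕ) (ψ : SqEdge → Bool) (x y : ℕ) : ℤ :=
  if 1 ≤ y ∧ (x + y) % 2 = p then Nplaq ψ x y else 0

section Propagation

variable {n p q x : ℕ}

theorem plaqOf_h_succ {y : ℕ} (hx : 1 ≤ x ∧ x ≤ n - 1) (hy : y + 1 ≤ n - 1) :
    plaqOf n p (.h x (y + 1)) =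
      if (x + (y + 1)) % 2 = p then some (x, y + 1)
      else if 1 ≤ y ∧ (x + y) % 2 = p then some (x, y) else none := by
  simp only [plaqOf]
  split_ifs <;> simp_all
  omega

theorem toInt_xor_altPlaq_sub_toInt (ψ : SqEdge → Bool) {a b : ℕ} {e : SqEdge}
    (he : e = .h a b ∨ e = .h a (b + 1)) :
    (xor (ψ e) (altPlaq ψ a b)).toInt - (ψ e).toInt = -Nplaq ψ a b := by
  unfold altPlaq Nplaq
  rcases he with rfl | rfl <;>
    cases ψ (.h a b) <;> cases ψ (.h a (b + 1)) <;> cases ψ (.v a b) <;>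
    cases ψ (.v (a + 1) b) <;> rfl

theorem toInt_gyrHalfCompl_h_sub_toInt (ψ : SqEdge → Bool) {y : ℕ} (hx : 1 ≤ x ∧ x ≤ n - 1)
    (hy : y + 1 ≤ n - 1) :
    (gyrHalfCompl n p ψ (.h x (y + 1))).toInt - (ψ (.h x (y + 1))).toInt =
      -(Ncell p ψ x (y + 1) + Ncell p ψ x y) := by
  have hv : validB n (.h x (y + 1)) = true := by
    simp only [validB, Bool.and_eq_true, decide_eq_true_eq]; omega
  have hp := plaqOf_h_succ (p := p) hx hy
  by_cases htop : (x + (y + 1)) % 2 = p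
  · rw [if_pos htop] at hp
    rw [gyrHalfCompl_of_plaqOf_eq_some ψ hv hp, toInt_xor_altPlaq_sub_toInt ψ (.inl rfl), Ncell,
      Ncell, if_pos ⟨by omega, htop⟩, if_neg (by omega), add_zero]
  by_cases hbot : 1 ≤ y ∧ (x + y) % 2 = p
  · rw [if_neg htop, if_pos hbot] at hp
    rw [gyrHalfCompl_of_plaqOf_eq_some ψ hv hp, toInt_xor_altPlaq_sub_toInt ψ (.inr rfl), Ncell,
      Ncell, if_neg (by omega), if_pos hbot, zero_add]
  · rw [if_neg htop, if_neg hbot] at hp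
    rw [gyrHalfCompl_of_plaqOf_eq_none ψ hv hp, Ncell, Ncell, if_neg (by omega), if_neg hbot]
    simp

theorem finsum_Ncell_succ_add_finsum_Ncell {S : Set (SqEdge → Bool)} (hS : S.Finite)
    (hT : Set.BijOn (gyrHalfCompl n q ∘ gyrHalfCompl n p) S S) {y : ℕ}
    (hx : 1 ≤ x ∧ x ≤ n - 1) (hy : y + 1 ≤ n - 1) :
    ∑ᶠ ψ ∈ S, (Ncell p ψ x (y + 1) + Ncell q (gyrHalfCompl n p ψ) x (y + 1)) +
      ∑ᶠ ψ ∈ S, (Ncell p ψ x y + Ncell q (gyrHalfCompl n p ψ) x y) = 0 := by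
  rw [← finsum_mem_add_distrib hS, ← neg_eq_zero,
    ← finsum_mem_sub_comp_eq_zero hS hT fun ψ => (ψ (.h x (y + 1))).toInt,
    ← finsum_mem_neg_distrib _ hS]
  refine finsum_mem_congr rfl fun ψ _ => ?_
  have hq := toInt_gyrHalfCompl_h_sub_toInt (p := q) (gyrHalfCompl n p ψ) hx hy
  have hp := toInt_gyrHalfCompl_h_sub_toInt (p := p) ψ hx hy
  simp only [Function.comp_apply]
  linarith

theorem finsum_Ncell_eq_zero {S : Set (SqEdge → Bool)} (hS : S.Finite)
    (hT : Set.BijOn (gyrHalfCompl n q ∘ gyrHalfCompl n p) S S) (hx : 1 ≤ x ∧ x ≤ n - 1) :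
    ∀ y ≤ n - 1, ∑ᶠ ψ ∈ S, (Ncell p ψ x y + Ncell q (gyrHalfCompl n p ψ) x y) = 0
  | 0, _ => by simp [Ncell]
  | y + 1, hy => by
    simpa [finsum_Ncell_eq_zero hS hT hx y (by omega)] using
      finsum_Ncell_succ_add_finsum_Ncell hS hT hx hy

theorem finsum_Nplaq_eq_zero {S : Set (SqEdge → Bool)} (hS : S.Finite)
    (hT : Set.BijOn (gyrHalfCompl n q ∘ gyrHalfCompl n p) S S) (hqp : q ≠ p) {y : ℕ}
    (hxy : IsCell n p x y) : ∑ᶠ ψ ∈ S, Nplaq ψ x y = 0 := by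
  obtain ⟨⟨hx1, hx2, hy1, hy2⟩, hpar⟩ := hxy
  simpa [Ncell, hy1, hpar, hqp.symm] using finsum_Ncell_eq_zero hS hT ⟨hx1, hx2⟩ y hy2

end Propagation

theorem neighbouring_plaquette_orbit_relation_general (n : ℕ)
    (x y x' y' : ℕ)
    (hα : 1 ≤ x ∧ x ≤ n - 1 ∧ 1 ≤ y ∧ y ≤ n - 1)
    (hβ : 1 ≤ x' ∧ x' ≤ n - 1 ∧ 1 ≤ y' ∧ y' ≤ n - 1)
    (hpar : (x + y) % 2 = 1)
    (hadj : (x' = x ∧ (y' = y + 1 ∨ y' + 1 = y)) ∨ (y' = y ∧ (x' = x + 1 ∨ x' + 1 = x)))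
    (φ : SqEdge → Bool) (hφ : IsFpl n φ ∧ BPlus n φ) :
    ∑ᶠ ψ ∈ orbitG n φ, Nplaq ψ x y = ∑ᶠ ψ ∈ orbitG n (Htp n φ), Nplaq ψ x' y' := by
  have hφ' : IsSupported n φ := hφ.1.isSupported
  have hHφ : IsSupported n (Htp n φ) := isSupported_complV _
  have hpar' : (x' + y') % 2 = 0 := by omega
  rw [finsum_Nplaq_eq_zero (orbitG_finite hφ') (gyr_eq_comp n ▸ bijOn_gyr_orbitG hφ')
      zero_ne_one ⟨hα, hpar⟩,
    finsum_Nplaq_eq_zero (orbitG_finite hHφ) (bijOn_gyrHalfCompl_comp_orbitG hHφ)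
      one_ne_zero ⟨hβ, hpar'⟩]

/-- **Neighbouring-plaquette orbit relation.**  If plaquettes `α = (x,y)` (a cell of
the `H₊` round, i.e. `x+y` odd) and `β = (x',y')` share an edge, then the orbit sums
of `N_α` along the `G`-orbit of `φ` and of `N_β` along the `G`-orbit of `H̃₊(φ)`
coincide. -/
theorem neighbouring_plaquette_orbit_relation (n : ℕ) (hn : 1 ≤ n)
    (x y x' y' : ℕ)
    (hα : 1 ≤ x ∧ x ≤ n - 1 ∧ 1 ≤ y ∧ y ≤ n - 1)
    (hβ : 1 ≤ x' ∧ x' ≤ n - 1 ∧ 1 ≤ y' ∧ y' ≤ n - 1)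
    (hpar : (x + y) % 2 = 1)
    (hadj : (x' = x ∧ (y' = y + 1 ∨ y' + 1 = y)) ∨ (y' = y ∧ (x' = x + 1 ∨ x' + 1 = x)))
    (φ : SqEdge → Bool) (hφ : IsFpl n φ ∧ BPlus n φ) :
    ∑ᶠ ψ ∈ orbitG n φ, Nplaq ψ x y = ∑ᶠ ψ ∈ orbitG n (Htp n φ), Nplaq ψ x' y' :=
  neighbouring_plaquette_orbit_relation_general n x y x' y' hα hβ hpar hadj φ hφ
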